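/- The TRS R = { half(0) → 0, half(s(0)) → 0, half(s(s(x))) → s(half(x)), bits(0) → 0, bits(s(x)) → s(bits(half(s(x)))) } over the signature {0, s, half, bits} is terminating: its rewrite relation →_R is well-founded. -/
import Mathlib


/-- First-order terms over a signature `F` with arity function `ar` and variables `V`. -/
inductive Term (F : Type) (ar : F → ℕ) (V : Type) : Type where
  | var : V → Term F ar V
  | app : (f : F) → (Fin (ar f) → Term F ar V) → Term F ar V

namespace Term

variable {F V : Type} {ar : F → ℕ}

/-- Application of a substitution `σ : V → Term F ar V` to a term. -/
def subst (σ : V → Term F ar V) : Term F ar V → Term F ar V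
  | var v => σ v
  | app f args => app f (fun i => (args i).subst σ)

/-- Interpretation of a term in an `F`-algebra with carrier `A` under assignment `α`. -/
def eval {A : Type} (I : (f : F) → (Fin (ar f) → A) → A) (α : V → A) :
    Term F ar V → A
  | var v => α v
  | app f args => I f (fun i => (args i).eval I α)

/-- A term is a non-variable term (function application). -/
def IsApp : Term F ar V → Prop
  | var _ => False
  | app _ _ => True

end Term

section Algebra

variable {F V A : Type}

/-- `RC lt a b` : reflexive closure of the strict order `lt`, i.e. `a ≤ b`. -/
def RC (lt : A → A → Prop) (a b : A) : Prop := lt a b ∨ a = b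

variable (ar : F → ℕ) (I : (f : F) → (Fin (ar f) → A) → A) (lt : A → A → Prop)

/-- `s >_A t` : `[α](t) < [α](s)` for every assignment `α`. -/
def GTA (s t : Term F ar V) : Prop := ∀ α : V → A, lt (t.eval I α) (s.eval I α)

/-- `s ≥_A t` : `[α](t) ≤ [α](s)` for every assignment `α`. -/
def GEA (s t : Term F ar V) : Prop := ∀ α : V → A, RC lt (t.eval I α) (s.eval I α)

/-- The algebra is simple: `f_A(a_1, …, a_n) ≥ a_i`. -/
def Simple : Prop := ∀ (f : F) (as : Fin (ar f) → A) (i : Fin (ar f)), RC lt (as i) (I f as)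

/-- The algebra is weakly monotone: `a_i > b` implies
`f_A(a_1,…,a_i,…,a_n) ≥ f_A(a_1,…,b,…,a_n)`. -/
def WeaklyMonotone : Prop :=
  ∀ (f : F) (as : Fin (ar f) → A) (i : Fin (ar f)) (b : A),
    lt b (as i) → RC lt (I f (Function.update as i b)) (I f as)

end Algebra

section WPO

variable {F V A : Type} (ar : F → ℕ) (I : (f : F) → (Fin (ar f) → A) → A)
  (lt : A → A → Prop) (prec : F → F → Prop)

mutual
  /-- The weighted path order induced by the algebra `(A, I, lt)` and the precedence `prec`. -/
  inductive WPO : Term F ar V → Term F ar V → Prop where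
    /-- (1) `s >_A t`. -/
    | alg {s t} : GTA ar I lt s t → WPO s t
    /-- (2a) `s ≥_A t` and `s_i >_wpo t`. -/
    | sub {f ss t} (i : Fin (ar f)) :
        GEA ar I lt (Term.app f ss) t → WPO (ss i) t → WPO (Term.app f ss) t
    /-- (2a) `s ≥_A t` and `s_i = t`. -/
    | subEq {f ss t} (i : Fin (ar f)) :
        GEA ar I lt (Term.app f ss) t → ss i = t → WPO (Term.app f ss) t
    /-- (2b-i) `s ≥_A t`, `s >_wpo t_j` for all `j`, and `f ≻ g`. -/
    | prc {f ss g ts} :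
        GEA ar I lt (Term.app f ss) (Term.app g ts) →
        (∀ j, WPO (Term.app f ss) (ts j)) →
        prec f g → ¬ prec g f → WPO (Term.app f ss) (Term.app g ts)
    /-- (2b-ii) `s ≥_A t`, `s >_wpo t_j` for all `j`, `f ≿ g` and lex comparison of arguments. -/
    | lex {f ss g ts} :
        GEA ar I lt (Term.app f ss) (Term.app g ts) →
        (∀ j, WPO (Term.app f ss) (ts j)) →
        prec f g → WPOLex (List.ofFn ss) (List.ofFn ts) →
        WPO (Term.app f ss) (Term.app g ts)

  /-- Lexicographic extension of `WPO` to argument lists (of possibly different lengths). -/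
  inductive WPOLex : List (Term F ar V) → List (Term F ar V) → Prop where
    | head {s t l₁ l₂} : WPO s t → WPOLex (s :: l₁) (t :: l₂)
    | tail {s l₁ l₂} : WPOLex l₁ l₂ → WPOLex (s :: l₁) (s :: l₂)
    | longer {s l₁} : WPOLex (s :: l₁) []
end

end WPO

section SPO

variable {F V : Type} {ar : F → ℕ} (qge qgt : Term F ar V → Term F ar V → Prop)

mutual
  /-- The semantic path order induced by the order pair `(qge, qgt)` (`⊒∼`, `⊐`). -/
  inductive SPO : Term F ar V → Term F ar V → Prop where
    /-- (1) `s_i >_spo t`. -/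
    | sub {f ss t} (i : Fin (ar f)) : SPO (ss i) t → SPO (Term.app f ss) t
    /-- (1) `s_i = t`. -/
    | subEq {f ss t} (i : Fin (ar f)) : ss i = t → SPO (Term.app f ss) t
    /-- (2a) `s >_spo t_j` for all `j` and `s ⊐ t`. -/
    | gt {f ss g ts} : (∀ j, SPO (Term.app f ss) (ts j)) →
        qgt (Term.app f ss) (Term.app g ts) → SPO (Term.app f ss) (Term.app g ts)
    /-- (2b) `s >_spo t_j` for all `j`, `s ⊒∼ t` and lex comparison of arguments. -/
    | lex {f ss g ts} : (∀ j, SPO (Term.app f ss) (ts j)) →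
        qge (Term.app f ss) (Term.app g ts) →
        SPOLex (List.ofFn ss) (List.ofFn ts) → SPO (Term.app f ss) (Term.app g ts)

  /-- Lexicographic extension of `SPO` to argument lists. -/
  inductive SPOLex : List (Term F ar V) → List (Term F ar V) → Prop where
    | head {s t l₁ l₂} : SPO s t → SPOLex (s :: l₁) (t :: l₂)
    | tail {s l₁ l₂} : SPOLex l₁ l₂ → SPOLex (s :: l₁) (s :: l₂)
    | longer {s l₁} : SPOLex (s :: l₁) []
end

end SPO

section Props

variable {F V : Type} {ar : F → ℕ}

/-- Closure under contexts: replacing one argument. -/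
def ClosedCtx (R : Term F ar V → Term F ar V → Prop) : Prop :=
  ∀ (f : F) (args : Fin (ar f) → Term F ar V) (i : Fin (ar f)) (s t : Term F ar V),
    R s t → R (Term.app f (Function.update args i s)) (Term.app f (Function.update args i t))

/-- Closure under substitutions. -/
def ClosedSubst (R : Term F ar V → Term F ar V → Prop) : Prop :=
  ∀ (σ : V → Term F ar V) (s t : Term F ar V), R s t → R (s.subst σ) (t.subst σ)

/-- A reduction order: a well-founded strict order closed under contexts and substitutions. -/
def ReductionOrder (R : Term F ar V → Term F ar V → Prop) : Prop :=
  (∀ s, ¬ R s s) ∧ Transitive R ∧ WellFounded (fun s t => R t s) ∧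
    ClosedCtx R ∧ ClosedSubst R

/-- `Subterm t s` : `t` is a subterm of `s`. -/
inductive Subterm : Term F ar V → Term F ar V → Prop where
  | refl {t} : Subterm t t
  | arg {t f ss} (i : Fin (ar f)) : Subterm t (ss i) → Subterm t (Term.app f ss)

/-- `ProperSubterm t s` : `t` is a proper subterm of `s`. -/
def ProperSubterm (t s : Term F ar V) : Prop :=
  ∃ (f : F) (ss : Fin (ar f) → Term F ar V) (i : Fin (ar f)),
    s = Term.app f ss ∧ Subterm t (ss i)

/-- The rewrite relation of a TRS `R`: closure of the rules under substitutions and contexts. -/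
inductive Rewrite (R : Set (Term F ar V × Term F ar V)) : Term F ar V → Term F ar V → Prop where
  | rule {l r} (σ : V → Term F ar V) : (l, r) ∈ R → Rewrite R (l.subst σ) (r.subst σ)
  | ctx {s t} (f : F) (args : Fin (ar f) → Term F ar V) (i : Fin (ar f)) :
      Rewrite R s t →
      Rewrite R (Term.app f (Function.update args i s)) (Term.app f (Function.update args i t))

end Props

section Pair

variable {F V A : Type} (ar : F → ℕ) (I : (f : F) → (Fin (ar f) → A) → A)
  (lt : A → A → Prop) (prec : F → F → Prop)

/-- `s ⊒∼ t` : both non-variable, and `s >_A t`, or `s ≥_A t` and `root(s) ≿ root(t)`. -/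
def QGE (s t : Term F ar V) : Prop :=
  ∃ (f : F) (ss : Fin (ar f) → Term F ar V) (g : F) (ts : Fin (ar g) → Term F ar V),
    s = Term.app f ss ∧ t = Term.app g ts ∧
      (GTA ar I lt s t ∨ (GEA ar I lt s t ∧ prec f g))

/-- `s ⊐ t` : both non-variable, and `s >_A t`, or `s ≥_A t` and `root(s) ≻ root(t)`. -/
def QGT (s t : Term F ar V) : Prop :=
  ∃ (f : F) (ss : Fin (ar f) → Term F ar V) (g : F) (ts : Fin (ar g) → Term F ar V),
    s = Term.app f ss ∧ t = Term.app g ts ∧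
      (GTA ar I lt s t ∨ (GEA ar I lt s t ∧ prec f g ∧ ¬ prec g f))

variable (Im : (f : F) → (Fin (ar f) → A) → A)

/-- Interpretation of the marked term `t♯` (root symbol interpreted by `Im`). -/
def evalSharp (α : V → A) : Term F ar V → A
  | .var v => α v
  | .app f ts => Im f (fun i => (ts i).eval I α)

/-- `s♯ >_A t♯`. -/
def GTAS (s t : Term F ar V) : Prop :=
  ∀ α : V → A, lt (evalSharp ar I Im α t) (evalSharp ar I Im α s)

/-- `s♯ ≥_A t♯`. -/
def GEAS (s t : Term F ar V) : Prop :=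
  ∀ α : V → A, RC lt (evalSharp ar I Im α t) (evalSharp ar I Im α s)

/-- Marked version of `⊒∼` : `s♯ >_A t♯`, or `s♯ ≥_A t♯` and `root(s) ≿ root(t)`. -/
def QGES (s t : Term F ar V) : Prop :=
  ∃ (f : F) (ss : Fin (ar f) → Term F ar V) (g : F) (ts : Fin (ar g) → Term F ar V),
    s = Term.app f ss ∧ t = Term.app g ts ∧
      (GTAS ar I lt Im s t ∨ (GEAS ar I lt Im s t ∧ prec f g))

/-- Marked version of `⊐` : `s♯ >_A t♯`, or `s♯ ≥_A t♯` and `root(s) ≻ root(t)`. -/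
def QGTS (s t : Term F ar V) : Prop :=
  ∃ (f : F) (ss : Fin (ar f) → Term F ar V) (g : F) (ts : Fin (ar g) → Term F ar V),
    s = Term.app f ss ∧ t = Term.app g ts ∧
      (GTAS ar I lt Im s t ∨ (GEAS ar I lt Im s t ∧ prec f g ∧ ¬ prec g f))

/-- The generalized weighted path order: `s ≥_A t` and `s >_spo t` for the SPO induced
from the marked order pair. -/
def GWPO (s t : Term F ar V) : Prop :=
  GEA ar I lt s t ∧ SPO (QGES ar I lt prec Im) (QGTS ar I lt prec Im) s t

end Pair

/-- Signature `{0, s, half, bits}`: symbol `0` is `zero` (arity 0), `1` is `s`,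
`2` is `half`, `3` is `bits` (arity 1). -/
def ar19 : Fin 4 → ℕ
  | ⟨0, _⟩ => 0
  | ⟨1, _⟩ => 1
  | ⟨2, _⟩ => 1
  | ⟨3, _⟩ => 1

/-- The constant `0`. -/
abbrev z19 : Term (Fin 4) ar19 ℕ := Term.app 0 ![]
/-- `s(t)`. -/
abbrev s19 (t : Term (Fin 4) ar19 ℕ) : Term (Fin 4) ar19 ℕ := Term.app 1 ![t]
/-- `half(t)`. -/
abbrev half19 (t : Term (Fin 4) ar19 ℕ) : Term (Fin 4) ar19 ℕ := Term.app 2 ![t]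
/-- `bits(t)`. -/
abbrev bits19 (t : Term (Fin 4) ar19 ℕ) : Term (Fin 4) ar19 ℕ := Term.app 3 ![t]
/-- The variable `x`. -/
abbrev x19 : Term (Fin 4) ar19 ℕ := Term.var 0

/-- The `bits` TRS. -/
abbrev R19 : Set (Term (Fin 4) ar19 ℕ × Term (Fin 4) ar19 ℕ) :=
  { (half19 z19, z19),
    (half19 (s19 z19), z19),
    (half19 (s19 (s19 x19)), s19 (half19 x19)),
    (bits19 z19, z19),
    (bits19 (s19 x19), s19 (bits19 (half19 (s19 x19)))) }

/-- Interpretation into `ℕ × ℕ`: first component bounds the "value",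
second is a strictly decreasing cost. -/
def I19 : (f : Fin 4) → (Fin (ar19 f) → ℕ × ℕ) → ℕ × ℕ
  | ⟨0, _⟩, _ => (0, 0)
  | ⟨1, _⟩, as => ((as ⟨0, Nat.le_refl 1⟩).1 + 1, (as ⟨0, Nat.le_refl 1⟩).2)
  | ⟨2, _⟩, as => ((as ⟨0, Nat.le_refl 1⟩).1 / 2,
      (as ⟨0, Nat.le_refl 1⟩).2 + (as ⟨0, Nat.le_refl 1⟩).1 + 1)
  | ⟨3, _⟩, as => ((as ⟨0, Nat.le_refl 1⟩).1,
      (as ⟨0, Nat.le_refl 1⟩).2 + ((as ⟨0, Nat.le_refl 1⟩).1 + 2) ^ 2)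

/-- The measure of a term. -/
def μe (t : Term (Fin 4) ar19 ℕ) : ℕ × ℕ := t.eval I19 (fun _ => (0, 0))

section EvalLemmas

variable (α : ℕ → ℕ × ℕ)

theorem eval_z19 : z19.eval I19 α = (0, 0) := rfl
theorem eval_s19 (t) : (s19 t).eval I19 α =
    ((t.eval I19 α).1 + 1, (t.eval I19 α).2) := rfl
theorem eval_half19 (t) : (half19 t).eval I19 α =
    ((t.eval I19 α).1 / 2, (t.eval I19 α).2 + (t.eval I19 α).1 + 1) := rfl
theorem eval_bits19 (t) : (bits19 t).eval I19 α =
    ((t.eval I19 α).1, (t.eval I19 α).2 + ((t.eval I19 α).1 + 2) ^ 2) := rfl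
theorem eval_x19 : x19.eval I19 α = α 0 := rfl

end EvalLemmas

theorem eval_subst19 (σ : ℕ → Term (Fin 4) ar19 ℕ) :
    ∀ t : Term (Fin 4) ar19 ℕ, μe (t.subst σ) = t.eval I19 (fun v => μe (σ v))
  | .var v => rfl
  | .app f args => by
    show I19 f _ = I19 f _
    exact congrArg _ (funext fun i => eval_subst19 σ (args i))

theorem rewrite_decreases {s t : Term (Fin 4) ar19 ℕ} (h : Rewrite R19 s t) :
    (μe t).1 ≤ (μe s).1 ∧ (μe t).2 < (μe s).2 := by
  induction h with
  | rule σ hmem =>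
    rw [eval_subst19, eval_subst19]
    simp only [R19, Set.mem_insert_iff, Set.mem_singleton_iff, Prod.mk.injEq] at hmem
    rcases hmem with ⟨hl, hr⟩ | ⟨hl, hr⟩ | ⟨hl, hr⟩ | ⟨hl, hr⟩ | ⟨hl, hr⟩ <;>
        subst hl <;> subst hr <;>
        simp only [eval_z19, eval_s19, eval_half19, eval_bits19, eval_x19]
    · exact ⟨le_refl _, by omega⟩
    · exact ⟨le_refl _, by omega⟩
    · constructor <;> omega
    · exact ⟨le_refl _, by omega⟩
    · set n := (μe (σ 0)).1 with hn
      set m := (μe (σ 0)).2 with hm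
      refine ⟨by omega, ?_⟩
      have h2 : 2 * ((n + 1) / 2) ≤ n + 1 := by omega
      set k := (n + 1) / 2 with hk
      nlinarith [h2, Nat.mul_le_mul h2 h2, Nat.zero_le m, Nat.zero_le n]
  | @ctx s' t' f args i h ih =>
    obtain ⟨ih1, ih2⟩ := ih
    rcases f with ⟨fv, hf⟩
    rcases i with ⟨iv, hiv⟩
    interval_cases fv
    · exact absurd hiv (by simp [ar19])
    · -- f = s
      have hiv1 : iv < 1 := hiv
      have hiv0 : iv = 0 := by omega
      subst hiv0
      have key : ∀ u, μe (Term.app ⟨1, hf⟩ (Function.update args ⟨0, hiv⟩ u)) =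
          ((μe u).1 + 1, (μe u).2) := fun u => rfl
      rw [key, key]
      exact ⟨by omega, by omega⟩
    · -- f = half
      have hiv1 : iv < 1 := hiv
      have hiv0 : iv = 0 := by omega
      subst hiv0
      have key : ∀ u, μe (Term.app ⟨2, hf⟩ (Function.update args ⟨0, hiv⟩ u)) =
          ((μe u).1 / 2, (μe u).2 + (μe u).1 + 1) := fun u => rfl
      rw [key, key]
      exact ⟨by omega, by omega⟩
    · -- f = bits
      have hiv1 : iv < 1 := hiv
      have hiv0 : iv = 0 := by omega
      subst hiv0
      have key : ∀ u, μe (Term.app ⟨3, hf⟩ (Function.update args ⟨0, hiv⟩ u)) =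
          ((μe u).1, (μe u).2 + ((μe u).1 + 2) ^ 2) := fun u => rfl
      rw [key, key]
      refine ⟨ih1, ?_⟩
      have hp : ((μe t').1 + 2) ^ 2 ≤ ((μe s').1 + 2) ^ 2 :=
        Nat.pow_le_pow_left (by omega) 2
      omega

/-- The `bits` TRS is terminating: its rewrite relation is
well-founded. -/
theorem bits_trs_terminating :
    WellFounded (fun s t : Term (Fin 4) ar19 ℕ => Rewrite R19 t s) := by
  have hsub : Subrelation (fun s t : Term (Fin 4) ar19 ℕ => Rewrite R19 t s)
      (InvImage (· < ·) (fun t => (μe t).2)) := fun h => (rewrite_decreases h).2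
  exact Subrelation.wf hsub (InvImage.wf _ Nat.lt_wfRel.wf)
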